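/- arXiv:1912.03065 — 5 statements merged into one kernel-verified Lean document; each statement's English description precedes it below -/
import Mathlib

section
/- Let z be an odd prime with z ≡ 3 (mod 4), and let q be a positive integer coprime to z whose multiplicative order modulo z equals (z-1)/2. Let n = (z-1)/2 and e = (q^n - 1)/z. Then the set { s_q(k*e) : 1 ≤ k ≤ z-1 } has exactly two elements. -/
/-- `mqe q e` is the smallest positive integer `t` such that some sum of `t`
nonnegative powers of `q` is divisible by `e`. -/
noncomputable def mqe (q e : ℕ) : ℕ :=
  sInf {t | 0 < t ∧ ∃ f : Fin t → ℕ, e ∣ ∑ i, q ^ f i}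


private lemma digit_step (q m d : ℕ) (hq : 1 < q) (hd : d < q) :
    (Nat.digits q (q * m + d)).sum = (Nat.digits q m).sum + d := by
  rcases Nat.eq_zero_or_pos (q * m + d) with h | h
  · have hm : m = 0 := by
      rcases Nat.eq_zero_or_pos m with h' | h'
      · exact h'
      · exfalso; have : 0 < q * m := Nat.mul_pos (by omega) h'; omega
    have hd0 : d = 0 := by omega
    simp [hm, hd0]
  · rw [Nat.digits_def' hq h]
    have h1 : (q * m + d) % q = d := by
      rw [Nat.mul_add_mod]; exact Nat.mod_eq_of_lt hd
    have h2 : (q * m + d) / q = m := by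
      rw [Nat.mul_add_div (by omega : 0 < q), Nat.div_eq_of_lt hd, add_zero]
    rw [h1, h2, List.sum_cons]; omega

private lemma key_formula (z q k : ℕ) (hz : 1 < z) (hq : 1 < q) (hk : k < z) :
    ∀ n : ℕ, z * (Nat.digits q (k * q ^ n / z)).sum + q * ((k * q ^ n) % z)
      + ∑ i ∈ Finset.range n, (k * q ^ (i + 1)) % z
      = q * (k % z) + q * ∑ i ∈ Finset.range n, (k * q ^ (i + 1)) % z := by
  intro n
  induction n with
  | zero =>
    simp [Nat.div_eq_of_lt hk, Nat.mod_eq_of_lt hk]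
  | succ n ih =>
    have hz0 : 0 < z := by omega
    set x := (k * q ^ n) % z with hxdef
    set m := k * q ^ n / z with hmdef
    have hx : x < z := Nat.mod_lt _ hz0
    have hx' : (k * q ^ (n + 1)) % z < z := Nat.mod_lt _ hz0
    set x' := (k * q ^ (n + 1)) % z with hx'def
    set d := q * x / z with hddef
    have hxx' : x' = (q * x) % z := by
      have h1 : k * q ^ (n+1) = q * (k * q ^ n) := by ring
      have h2 : q * (k * q ^ n) ≡ q * x [MOD z] := Nat.ModEq.mul_left q (Nat.mod_modEq _ _).symm
      rw [hx'def, h1]; exact h2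
    have h1 : q * x = z * d + x' := by
      rw [hddef, hxx']; exact (Nat.div_add_mod (q * x) z).symm
    have hd : d < q := by
      rw [hddef]
      apply Nat.div_lt_of_lt_mul
      calc q * x < q * z := Nat.mul_lt_mul_of_pos_left hx (by omega)
      _ = z * q := by ring
    have h2 : k * q ^ (n + 1) / z = q * m + d := by
      have heq : k * q ^ (n + 1) = z * (q * m + d) + x' := by
        have hm : k * q ^ n = z * m + x := (Nat.div_add_mod (k * q ^ n) z).symm
        calc k * q ^ (n+1) = q * (k * q ^ n) := by ring
        _ = q * (z * m + x) := by rw [← hm]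
        _ = z * (q * m) + q * x := by ring
        _ = z * (q * m) + (z * d + x') := by rw [h1]
        _ = z * (q * m + d) + x' := by ring
      rw [heq, Nat.mul_add_div hz0, Nat.div_eq_of_lt hx', add_zero]
    rw [h2, digit_step q m d hq hd, Finset.sum_range_succ, ← hx'def]
    have e1 : z * ((Nat.digits q m).sum + d) = z * (Nat.digits q m).sum + z * d := by ring
    have e2 : q * (∑ i ∈ Finset.range n, (k * q ^ (i+1)) % z + x')
        = q * ∑ i ∈ Finset.range n, (k * q ^ (i+1)) % z + q * x' := by ring
    rw [e1, e2]
    linarith [ih, h1]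

theorem stmt_15 (z q n e : ℕ) (hz : z.Prime) (hz4 : z % 4 = 3) (hq : 1 < q)
    (hcop : Nat.gcd q z = 1) (hn : n = (z - 1) / 2)
    (hord : orderOf (q : ZMod z) = (z - 1) / 2) (he : e = (q ^ n - 1) / z) :
    ((Finset.Icc 1 (z - 1)).image (fun k => (Nat.digits q (k * e)).sum)).card = 2 := by
  haveI : Fact z.Prime := ⟨hz⟩
  have hz2 : 2 ≤ z := hz.two_le
  have hz3 : 3 ≤ z := by omega
  have hn0 : 0 < n := by omega
  have hz1 : z - 1 = 2 * n := by omega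
  have hnodd : n % 2 = 1 := by omega
  set a : ZMod z := (q : ZMod z) with ha
  have horda : orderOf a = n := by rw [hord]; omega
  have han : a ^ n = 1 := by rw [← horda]; exact pow_orderOf_eq_one a
  have ha0 : a ≠ 0 := by
    intro h
    rw [h, zero_pow (by omega : n ≠ 0)] at han
    exact zero_ne_one han
  have hinj : ∀ i j : ℕ, i ≤ j → j - i < n → a ^ i = a ^ j → i = j := by
    intro i j hij hlt heq
    by_contra hne
    have hpos : 0 < j - i := by omega
    have h1 : a ^ i * 1 = a ^ i * a ^ (j - i) := by
      rw [mul_one, ← pow_add, Nat.add_sub_cancel' hij]; exact heq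
    have h2 : (1 : ZMod z) = a ^ (j - i) := mul_left_cancel₀ (pow_ne_zero i ha0) h1
    have h3 := orderOf_le_of_pow_eq_one hpos h2.symm
    rw [horda] at h3; omega
  have hpow_mod : ∀ m : ℕ, a ^ m = a ^ (m % n) := by
    intro m
    conv_lhs => rw [← Nat.div_add_mod m n]
    rw [pow_add, pow_mul, han, one_pow, one_mul]
  have hno : ∀ m1 : ℕ, a ^ m1 ≠ -1 := by
    intro m1 hm
    have h2 : a ^ (2 * m1) = 1 := by rw [two_mul, pow_add, hm]; simp
    have hdvd2 : n ∣ 2 * m1 := by rw [← horda]; exact orderOf_dvd_of_pow_eq_one h2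
    have hndvd : n ∣ m1 := by
      have hcop2 : Nat.Coprime n 2 := by
        simp [Nat.coprime_two_right, Nat.odd_iff, hnodd]
      exact hcop2.dvd_of_dvd_mul_left hdvd2
    obtain ⟨t, ht⟩ := hndvd
    rw [ht, pow_mul, han, one_pow] at hm
    haveI : Fact (2 < z) := ⟨by omega⟩
    exact ZMod.neg_one_ne_one hm.symm
  -- the coset finsets
  set A : Finset (ZMod z) := (Finset.range n).image (a ^ ·) with hA
  set B : Finset (ZMod z) := A.image (fun x => -x) with hB
  have hAinj : ∀ x ∈ Finset.range n, ∀ y ∈ Finset.range n, a ^ x = a ^ y → x = y := by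
    intro i hi j hj hij
    rw [Finset.mem_range] at hi hj
    rcases le_total i j with h | h
    · exact hinj i j h (by omega) hij
    · exact (hinj j i h (by omega) hij.symm).symm
  have hAcard : A.card = n := by
    rw [hA, Finset.card_image_of_injOn hAinj, Finset.card_range]
  have hBcard : B.card = n := by
    rw [hB, Finset.card_image_of_injective _ neg_injective, hAcard]
  have hAmem : ∀ m : ℕ, a ^ m ∈ A := by
    intro m
    rw [hA, Finset.mem_image]
    exact ⟨m % n, Finset.mem_range.mpr (Nat.mod_lt _ hn0), (hpow_mod m).symm⟩
  have hdisj : Disjoint A B := by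
    rw [Finset.disjoint_left]
    intro x hxA hxB
    rw [hB, Finset.mem_image] at hxB
    obtain ⟨y, hyA, hyx⟩ := hxB
    rw [hA, Finset.mem_image] at hxA hyA
    obtain ⟨i, hi, hix⟩ := hxA
    obtain ⟨j, hj, hjy⟩ := hyA
    rw [Finset.mem_range] at hj
    apply hno (i + (n - j))
    have hxy : a ^ i = -a ^ j := by rw [hix, ← hyx, hjy]
    have hjn : j + (n - j) = n := by omega
    rw [pow_add, hxy, neg_mul, ← pow_add, hjn, han]
  have hsub : A ∪ B ⊆ Finset.univ.erase 0 := by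
    intro x hx
    rw [Finset.mem_union] at hx
    have hx0 : x ≠ 0 := by
      rcases hx with hx | hx
      · rw [hA, Finset.mem_image] at hx; obtain ⟨i, _, hi⟩ := hx
        rw [← hi]; exact pow_ne_zero _ ha0
      · rw [hB, Finset.mem_image] at hx; obtain ⟨y, hy, hxy⟩ := hx
        rw [hA, Finset.mem_image] at hy; obtain ⟨i, _, hi⟩ := hy
        rw [← hxy, ← hi]; simp [pow_ne_zero _ ha0]
    exact Finset.mem_erase.mpr ⟨hx0, Finset.mem_univ x⟩
  have hUeq : A ∪ B = Finset.univ.erase 0 := by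
    apply Finset.eq_of_subset_of_card_le hsub
    rw [Finset.card_erase_of_mem (Finset.mem_univ 0), Finset.card_univ, ZMod.card z,
      Finset.card_union_of_disjoint hdisj, hAcard, hBcard]
    omega
  -- the weight function
  set S : ZMod z → ℕ := fun w => ∑ i ∈ Finset.range n, (w * a ^ (i + 1)).val with hS
  have hinj1 : ∀ x ∈ Finset.range n, ∀ y ∈ Finset.range n,
      a ^ (x + 1) = a ^ (y + 1) → x = y := by
    intro i hi j hj hij
    rw [Finset.mem_range] at hi hj
    rcases le_total i j with h | h
    · have := hinj (i+1) (j+1) (by omega) (by omega) hij; omega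
    · have := hinj (j+1) (i+1) (by omega) (by omega) hij.symm; omega
  have himgA : (Finset.range n).image (fun i => a ^ (i + 1)) = A := by
    apply Finset.eq_of_subset_of_card_le
    · intro x hx
      rw [Finset.mem_image] at hx
      obtain ⟨i, _, hix⟩ := hx
      rw [← hix]; exact hAmem _
    · rw [hAcard, Finset.card_image_of_injOn hinj1, Finset.card_range]
  have hSgen : ∀ w : ZMod z, S w = ∑ x ∈ A, (w * x).val := by
    intro w
    rw [hS, ← himgA, Finset.sum_image hinj1]
  have hA_mul : ∀ j : ℕ, A.image (fun x => a ^ j * x) = A := by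
    intro j
    apply Finset.eq_of_subset_of_card_le
    · intro x hx
      rw [Finset.mem_image] at hx
      obtain ⟨y, hy, hxy⟩ := hx
      rw [hA, Finset.mem_image] at hy
      obtain ⟨i, _, hiy⟩ := hy
      rw [← hxy, ← hiy, ← pow_add, hpow_mod]
      exact hAmem _
    · rw [Finset.card_image_of_injective _ (mul_right_injective₀ (pow_ne_zero j ha0))]
  have hSA : ∀ j : ℕ, S (a ^ j) = ∑ x ∈ A, x.val := by
    intro j
    rw [hSgen]
    conv_rhs => rw [← hA_mul j]
    rw [Finset.sum_image
      (fun x _ y _ h => mul_right_injective₀ (pow_ne_zero j ha0) h)]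
  have hSB : ∀ j : ℕ, S (-(a ^ j)) = ∑ x ∈ B, x.val := by
    intro j
    rw [hSgen]
    have e1 : ∑ x ∈ A, (-(a ^ j) * x).val = ∑ x ∈ A, (-(a ^ j * x)).val := by
      apply Finset.sum_congr rfl; intro x _; rw [neg_mul]
    rw [e1, hB, Finset.sum_image (fun x _ y _ h => neg_injective h)]
    conv_rhs => rw [← hA_mul j]
    rw [Finset.sum_image
      (fun x _ y _ h => mul_right_injective₀ (pow_ne_zero j ha0) h)]
  -- Gauss sum
  have hGauss : 2 * ∑ x : ZMod z, x.val = z * (z - 1) := by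
    have himg : (Finset.range z).image (Nat.cast : ℕ → ZMod z) = Finset.univ := by
      apply Finset.eq_of_subset_of_card_le (Finset.subset_univ _)
      rw [Finset.card_univ, ZMod.card z, Finset.card_image_of_injOn, Finset.card_range]
      intro i hi j hj hij
      simp only [Finset.mem_coe, Finset.mem_range] at hi hj
      have := congrArg ZMod.val hij
      rwa [ZMod.val_cast_of_lt hi, ZMod.val_cast_of_lt hj] at this
    have hcast : ∀ i ∈ Finset.range z, ((i : ZMod z)).val = i := by
      intro i hi; exact ZMod.val_cast_of_lt (Finset.mem_range.mp hi)
    have : ∑ x : ZMod z, x.val = ∑ i ∈ Finset.range z, i := by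
      rw [← himg, Finset.sum_image, Finset.sum_congr rfl hcast]
      intro i hi j hj hij
      simp only [Finset.mem_coe, Finset.mem_range] at hi hj
      have := congrArg ZMod.val hij
      rwa [ZMod.val_cast_of_lt hi, ZMod.val_cast_of_lt hj] at this
    rw [this, mul_comm, Finset.sum_range_id_mul_two]
  have hABsum : ∑ x ∈ A, x.val + ∑ x ∈ B, x.val = ∑ x : ZMod z, x.val := by
    rw [← Finset.sum_union hdisj, hUeq, Finset.sum_erase _ (by simp)]
  have hSne : ∑ x ∈ A, x.val ≠ ∑ x ∈ B, x.val := by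
    intro hEq
    have h4 : 2 * (2 * ∑ x ∈ A, x.val) = z * (z - 1) := by
      rw [two_mul (∑ x ∈ A, x.val)]
      rw [show (∑ x ∈ A, x.val) + (∑ x ∈ A, x.val)
          = ∑ x ∈ A, x.val + ∑ x ∈ B, x.val by omega, hABsum, hGauss]
    have hzz : z * (z - 1) = 2 * ((2 * n + 1) * n) := by
      have hz2n : z = 2 * n + 1 := by omega
      rw [hz2n, show 2 * n + 1 - 1 = 2 * n by omega]; ring
    have h5 : 2 * ∑ x ∈ A, x.val = (2 * n + 1) * n := by omega
    have h6 : ((2 * n + 1) * n) % 2 = 1 := by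
      rw [Nat.mul_mod, hnodd]; omega
    omega
  -- divisibility z ∣ q^n - 1
  have hq1 : 1 ≤ q ^ n := Nat.one_le_pow _ _ (by omega)
  have hdvdz : z ∣ q ^ n - 1 := by
    have hcast : ((q ^ n - 1 : ℕ) : ZMod z) = 0 := by
      rw [Nat.cast_sub hq1]
      push_cast
      have hqz : ((q : ZMod z)) ^ n = 1 := by rw [← ha]; exact han
      rw [hqz]; ring
    exact (ZMod.natCast_eq_zero_iff _ _).mp hcast
  obtain ⟨t, ht⟩ := hdvdz
  have hqn : q ^ n = z * t + 1 := by omega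
  have het : e = t := by
    rw [he, ht, Nat.mul_div_cancel_left t (by omega : 0 < z)]
  set f : ℕ → ℕ := fun k => (Nat.digits q (k * e)).sum with hf
  have hval : ∀ i k : ℕ, (k * q ^ (i + 1)) % z = ((k : ZMod z) * a ^ (i + 1)).val := by
    intro i k
    have hc : ((k : ZMod z) * a ^ (i + 1)) = ((k * q ^ (i + 1) : ℕ) : ZMod z) := by
      rw [ha]; push_cast; ring
    rw [hc, ZMod.val_natCast]
  have hmain : ∀ k : ℕ, 0 < k → k < z →
      z * f k + S ((k : ZMod z)) = q * S ((k : ZMod z)) := by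
    intro k hk0 hkz
    have hke : k * q ^ n / z = k * e := by
      have h3 : k * q ^ n = z * (k * t) + k := by rw [hqn]; ring
      rw [h3, Nat.mul_add_div (by omega : 0 < z), Nat.div_eq_of_lt hkz, add_zero, het]
    have hmod : (k * q ^ n) % z = k := by
      have h4 : k * q ^ n = z * (k * t) + k := by rw [hqn]; ring
      rw [h4, Nat.mul_add_mod, Nat.mod_eq_of_lt hkz]
    have hkey := key_formula z q k (by omega) hq hkz n
    rw [hke, hmod, Nat.mod_eq_of_lt hkz] at hkey
    have hsum : ∑ i ∈ Finset.range n, (k * q ^ (i + 1)) % z = S ((k : ZMod z)) := by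
      simp only [hS]
      exact Finset.sum_congr rfl (fun i _ => hval i k)
    rw [hsum] at hkey
    simp only [hf]
    linarith [hkey]
  have hdichot : ∀ k : ℕ, 0 < k → k < z →
      S ((k : ZMod z)) = ∑ x ∈ A, ZMod.val x ∨
        S ((k : ZMod z)) = ∑ x ∈ B, ZMod.val x := by
    intro k hk0 hkz
    have hk0' : ((k : ZMod z)) ≠ 0 := by
      intro h
      have h2 := congrArg ZMod.val h
      rw [ZMod.val_cast_of_lt hkz, ZMod.val_zero] at h2
      omega
    have hmem : (k : ZMod z) ∈ A ∪ B := by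
      rw [hUeq]; exact Finset.mem_erase.mpr ⟨hk0', Finset.mem_univ _⟩
    rw [Finset.mem_union] at hmem
    rcases hmem with h | h
    · left
      rw [hA, Finset.mem_image] at h
      obtain ⟨i, _, hi⟩ := h
      rw [← hi, hSA]
    · right
      rw [hB, Finset.mem_image] at h
      obtain ⟨y, hy, hxy⟩ := h
      rw [hA, Finset.mem_image] at hy
      obtain ⟨i, _, hi⟩ := hy
      rw [← hxy, ← hi, hSB]
  have hS1 : S (((1 : ℕ) : ZMod z)) = ∑ x ∈ A, ZMod.val x := by
    rw [Nat.cast_one, show (1 : ZMod z) = a ^ 0 by rw [pow_zero], hSA]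
  have hSz1 : S (((z - 1 : ℕ) : ZMod z)) = ∑ x ∈ B, ZMod.val x := by
    have hc : ((z - 1 : ℕ) : ZMod z) = -(a ^ 0) := by
      rw [pow_zero, Nat.cast_sub (by omega : 1 ≤ z), Nat.cast_one, ZMod.natCast_self]
      ring
    rw [hc, hSB]
  have hclass : ∀ k : ℕ, 0 < k → k < z → f k = f 1 ∨ f k = f (z - 1) := by
    intro k hk0 hkz
    rcases hdichot k hk0 hkz with h | h
    · left
      have e0 : S ((k : ZMod z)) = S (((1 : ℕ) : ZMod z)) := by rw [h, hS1]
      have h1 := hmain k hk0 hkz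
      have h2 := hmain 1 (by omega) (by omega)
      rw [e0] at h1
      exact Nat.eq_of_mul_eq_mul_left (by omega : 0 < z)
        (Nat.add_right_cancel (h1.trans h2.symm))
    · right
      have e0 : S ((k : ZMod z)) = S (((z - 1 : ℕ) : ZMod z)) := by rw [h, hSz1]
      have h1 := hmain k hk0 hkz
      have h2 := hmain (z - 1) (by omega) (by omega)
      rw [e0] at h1
      exact Nat.eq_of_mul_eq_mul_left (by omega : 0 < z)
        (Nat.add_right_cancel (h1.trans h2.symm))
  have hne : f 1 ≠ f (z - 1) := by
    intro hEq
    have h1 := hmain 1 (by omega) (by omega)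
    have h2 := hmain (z - 1) (by omega) (by omega)
    rw [hS1] at h1
    rw [hSz1, ← hEq] at h2
    apply hSne
    set SA := ∑ x ∈ A, ZMod.val x with hSAdef
    set SB := ∑ x ∈ B, ZMod.val x with hSBdef
    rcases lt_trichotomy SA SB with hlt | heq | hlt
    · exfalso
      have e3 : SA + (SB - SA) = SB := by omega
      have e1 : q * SB = q * SA + q * (SB - SA) := by
        calc q * SB = q * (SA + (SB - SA)) := by rw [e3]
        _ = q * SA + q * (SB - SA) := by ring
      have e2 : 2 * (SB - SA) ≤ q * (SB - SA) := Nat.mul_le_mul_right _ (by omega)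
      have e4 : 0 < SB - SA := by omega
      linarith
    · exact heq
    · exfalso
      have e3 : SB + (SA - SB) = SA := by omega
      have e1 : q * SA = q * SB + q * (SA - SB) := by
        calc q * SA = q * (SB + (SA - SB)) := by rw [e3]
        _ = q * SB + q * (SA - SB) := by ring
      have e2 : 2 * (SA - SB) ≤ q * (SA - SB) := Nat.mul_le_mul_right _ (by omega)
      have e4 : 0 < SA - SB := by omega
      linarith
  have himage : (Finset.Icc 1 (z - 1)).image f = {f 1, f (z - 1)} := by
    apply Finset.Subset.antisymm
    · intro v hv
      rw [Finset.mem_image] at hv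
      obtain ⟨k, hk, hkv⟩ := hv
      rw [Finset.mem_Icc] at hk
      rcases hclass k (by omega) (by omega) with h | h
      · rw [← hkv, h]; exact Finset.mem_insert_self _ _
      · rw [← hkv, h]; exact Finset.mem_insert_of_mem (Finset.mem_singleton_self _)
    · intro v hv
      rcases Finset.mem_insert.mp hv with h | h
      · rw [h]
        exact Finset.mem_image_of_mem f (Finset.mem_Icc.mpr ⟨le_refl 1, by omega⟩)
      · rw [Finset.mem_singleton] at h
        rw [h]
        exact Finset.mem_image_of_mem f (Finset.mem_Icc.mpr ⟨by omega, le_refl _⟩)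
  rw [himage, Finset.card_insert_of_notMem (by simp [hne]), Finset.card_singleton]
end

section
/- Let q, e, n, z be positive integers with q > 1, z dividing q^n - 1, e = (q^n - 1)/z, and let k, l be integers with 1 ≤ k, l < z. Write r(x) for the least nonnegative residue of x modulo z. Then a carry occurs in the base-q addition of k*e and l*e (equivalently, some base-q digit of k*e plus the corresponding digit of l*e is at least q, or there is an actual carry propagation) if and only if there exists i in {1,...,n} with r(k*q^i) + r(l*q^i) ≥ z and not all of the values r(k*q^j) + r(l*q^j) for j = 1,...,n are equal to z. -/
section helpers
variable {q n z : ℕ}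

lemma copH (hn : 0 < n) (hz : 2 ≤ z) (hdvd : z ∣ q ^ n - 1) (hq : 1 < q) :
    Nat.Coprime z q := by
  have h1 : Nat.Coprime z (q ^ n) := by
    have hd1 : Nat.gcd z (q ^ n) ∣ q ^ n - 1 := (Nat.gcd_dvd_left z (q ^ n)).trans hdvd
    have hd2 : Nat.gcd z (q ^ n) ∣ q ^ n := Nat.gcd_dvd_right _ _
    have h3 : Nat.gcd z (q ^ n) ∣ q ^ n - (q ^ n - 1) := Nat.dvd_sub hd2 hd1
    have h4 : q ^ n - (q ^ n - 1) = 1 := by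
      have hpow : 1 ≤ q ^ n := Nat.one_le_pow _ _ (by omega)
      omega
    rw [h4] at h3
    exact Nat.dvd_one.mp h3
  exact (Nat.coprime_pow_right_iff hn z q).mp h1

lemma powmodH (hdvd : z ∣ q ^ n - 1) (hq : 1 < q) (a : ℕ) :
    a * q ^ n % z = a % z := by
  have hpow : 1 ≤ q ^ n := Nat.one_le_pow _ _ (by omega)
  have h1 : q ^ n % z = 1 % z := by
    have := (Nat.modEq_iff_dvd' hpow).mpr hdvd
    exact this.symm
  calc a * q ^ n % z = (a % z) * (q ^ n % z) % z := by rw [Nat.mul_mod]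
    _ = (a % z) * (1 % z) % z := by rw [h1]
    _ = a * 1 % z := by rw [← Nat.mul_mod]
    _ = a % z := by rw [mul_one]

lemma mulmodH (hdvd : z ∣ q ^ n - 1) (hq : 1 < q) (k j1 j2 : ℕ) (h : j1 + j2 = n) :
    (k * q ^ j1 % z) * q ^ j2 % z = k % z := by
  calc (k * q ^ j1 % z) * q ^ j2 % z = (k * q ^ j1) * q ^ j2 % z := by
        rw [Nat.mod_mul_mod]
    _ = k * q ^ n % z := by rw [mul_assoc, ← pow_add, h]
    _ = k % z := powmodH hdvd hq k

lemma modne0H (hn : 0 < n) (hz : 2 ≤ z) (hdvd : z ∣ q ^ n - 1) (hq : 1 < q)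
    (k j : ℕ) (hk1 : 1 ≤ k) (hkz : k < z) : k * q ^ j % z ≠ 0 := by
  intro h0
  have hdvd2 : z ∣ k * q ^ j := Nat.dvd_of_mod_eq_zero h0
  have hcop : Nat.Coprime z (q ^ j) := (copH hn hz hdvd hq).pow_right _
  have : z ∣ k := hcop.dvd_of_dvd_mul_right hdvd2
  have := Nat.le_of_dvd (by omega) this
  omega

lemma hzeH (hq : 1 < q) (hdvd : z ∣ q ^ n - 1) (k : ℕ) :
    z * (k * ((q ^ n - 1) / z)) + k = k * q ^ n := by
  have he' : z * ((q ^ n - 1) / z) = q ^ n - 1 := Nat.mul_div_cancel' hdvd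
  have hpow : 1 ≤ q ^ n := Nat.one_le_pow _ _ (by omega)
  calc z * (k * ((q ^ n - 1) / z)) + k = k * (z * ((q ^ n - 1) / z)) + k := by ring
    _ = k * (q ^ n - 1) + k := by rw [he']
    _ = k * ((q ^ n - 1) + 1) := by ring
    _ = k * q ^ n := by rw [Nat.sub_add_cancel hpow]


lemma floorH (hn : 0 < n) (hz : 2 ≤ z) (hdvd : z ∣ q ^ n - 1) (hq : 1 < q)
    (k : ℕ) (hk1 : 1 ≤ k) (hkz : k < z) (i : ℕ) (hi : i ≤ n) :
    z * (k * ((q ^ n - 1) / z) / q ^ i) + k * q ^ (n - i) % z = k * q ^ (n - i) := by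
  set E := (q ^ n - 1) / z with hE
  set r := k * q ^ (n - i) % z with hr
  set X := k * q ^ (n - i) / z with hX
  have hXr : z * X + r = k * q ^ (n - i) := Nat.div_add_mod _ _
  have hr1 : 1 ≤ r := Nat.pos_of_ne_zero (modne0H hn hz hdvd hq k (n - i) hk1 hkz)
  have hrz : r < z := Nat.mod_lt _ (by omega)
  have hrk : k ≤ r * q ^ i := by
    have h1 : (r * q ^ i) % z = k % z := mulmodH hdvd hq k (n - i) i (by omega)
    have h2 : k % z = k := Nat.mod_eq_of_lt hkz
    have h3 := Nat.mod_le (r * q ^ i) z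
    omega
  have hze := hzeH (z := z) hq hdvd k
  have hq1 : q ^ (n - i) * q ^ i = q ^ n := by rw [← pow_add]; congr 1; omega
  have e1 : z * (X * q ^ i) + r * q ^ i = z * (k * E) + k := by
    calc z * (X * q ^ i) + r * q ^ i = (z * X + r) * q ^ i := by ring
      _ = k * q ^ (n - i) * q ^ i := by rw [hXr]
      _ = k * q ^ n := by rw [mul_assoc, hq1]
      _ = z * (k * E) + k := (hzeH hq hdvd k).symm
  have hrq : r * q ^ i < z * q ^ i :=
    mul_lt_mul_of_pos_right hrz (pow_pos (by omega) i)
  have hdivq : k * E / q ^ i = X := by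
    apply Nat.div_eq_of_lt_le
    · have hle : z * (X * q ^ i) ≤ z * (k * E) := by linarith
      exact Nat.le_of_mul_le_mul_left hle (by omega)
    · have e2 : z * ((X + 1) * q ^ i) = z * (X * q ^ i) + z * q ^ i := by ring
      have hlt : z * (k * E) < z * ((X + 1) * q ^ i) := by linarith
      have := Nat.lt_of_mul_lt_mul_left hlt
      calc k * E < (X + 1) * q ^ i := this
        _ = Nat.succ X * q ^ i := by rw [Nat.succ_eq_add_one]
  rw [hdivq]
  exact hXr

lemma shiftH (hn : 0 < n) (hz : 2 ≤ z) (hdvd : z ∣ q ^ n - 1) (hq : 1 < q)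
    (k : ℕ) (hkz : k < z) :
    ∑ j ∈ Finset.range n, k * q ^ j % z = ∑ i ∈ Finset.Icc 1 n, k * q ^ i % z := by
  have hIcc : (Finset.Icc 1 n) = Finset.Ico 1 (n + 1) := by
    rw [Finset.Ico_add_one_right_eq_Icc]
  rw [hIcc, Finset.sum_Ico_eq_sum_range]
  simp only [Nat.add_sub_cancel]
  obtain ⟨n', rfl⟩ : ∃ n', n = n' + 1 := ⟨n - 1, by omega⟩
  rw [Finset.sum_range_succ', Finset.sum_range_succ]
  have h0 : k * q ^ 0 % z = k := by
    rw [pow_zero, mul_one]; exact Nat.mod_eq_of_lt hkz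
  have hn' : k * q ^ (1 + n') % z = k := by
    rw [show 1 + n' = n' + 1 from by omega]
    rw [powmodH hdvd hq k, Nat.mod_eq_of_lt hkz]
  rw [h0, hn']
  congr 1
  apply Finset.sum_congr rfl
  intro i _
  rw [show 1 + i = i + 1 from by omega]

lemma sumfloorH (hn : 0 < n) (hz : 2 ≤ z) (hdvd : z ∣ q ^ n - 1) (hq : 1 < q)
    (k : ℕ) (hk1 : 1 ≤ k) (hkz : k < z) :
    z * ∑ i ∈ Finset.range n, k * ((q ^ n - 1) / z) / q ^ (i + 1)
      + ∑ i ∈ Finset.Icc 1 n, k * q ^ i % z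
      = k * ∑ j ∈ Finset.range n, q ^ j := by
  have hfl : ∀ i ∈ Finset.range n,
      z * (k * ((q ^ n - 1) / z) / q ^ (i + 1)) + k * q ^ (n - 1 - i) % z
        = k * q ^ (n - 1 - i) := by
    intro i hi
    have hi' : i < n := Finset.mem_range.mp hi
    have := floorH hn hz hdvd hq k hk1 hkz (i + 1) (by omega)
    rwa [show n - (i + 1) = n - 1 - i from by omega] at this
  have hsum := Finset.sum_congr rfl hfl
  rw [Finset.sum_add_distrib] at hsum
  rw [← Finset.mul_sum] at hsum
  have hrefl1 : ∑ i ∈ Finset.range n, k * q ^ (n - 1 - i) % z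
      = ∑ j ∈ Finset.range n, k * q ^ j % z :=
    Finset.sum_range_reflect (fun j => k * q ^ j % z) n
  have hrefl2 : ∑ i ∈ Finset.range n, k * q ^ (n - 1 - i)
      = ∑ j ∈ Finset.range n, k * q ^ j :=
    Finset.sum_range_reflect (fun j => k * q ^ j) n
  rw [hrefl1, hrefl2, shiftH hn hz hdvd hq k hkz, ← Finset.mul_sum] at hsum
  exact hsum


end helpers

lemma geomH (q : ℕ) (hq : 1 ≤ q) (n : ℕ) :
    (q - 1) * ∑ j ∈ Finset.range n, q ^ j + 1 = q ^ n := by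
  obtain ⟨p, rfl⟩ : ∃ p, q = p + 1 := ⟨q - 1, by omega⟩
  simp only [Nat.add_sub_cancel]
  induction n with
  | zero => simp
  | succ n ih =>
    rw [Finset.sum_range_succ, Nat.mul_add, pow_succ]
    have : p * (p+1)^n + (p+1)^n = (p+1)^n * (p+1) := by ring
    omega

lemma legendreH (q : ℕ) (hq : 1 < q) : ∀ (N x : ℕ), x < q ^ N →
    (Nat.digits q x).sum + (q - 1) * ∑ i ∈ Finset.range N, x / q ^ (i + 1) = x := by
  intro N
  induction N with
  | zero =>
    intro x hx
    have hx0 : x = 0 := by simpa using hx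
    subst hx0; simp
  | succ N ih =>
    intro x hx
    rcases Nat.eq_zero_or_pos x with rfl | hx0
    · simp
    rw [Nat.digits_def' hq hx0, Finset.sum_range_succ']
    have hdiv : ∀ i : ℕ, x / q ^ (i + 1 + 1) = (x / q) / q ^ (i + 1) := by
      intro i
      rw [Nat.div_div_eq_div_mul, ← pow_succ']
    simp only [hdiv, zero_add, pow_one]
    have hlt : x / q < q ^ N := by
      rw [Nat.div_lt_iff_lt_mul (by omega)]
      calc x < q ^ (N+1) := hx
        _ = q ^ N * q := by ring
    have h1 := ih (x / q) hlt
    have h2 : x % q + q * (x / q) = x := Nat.mod_add_div x q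
    have h3 : (q - 1) * (∑ i ∈ Finset.range N, x / q / q ^ (i + 1) + x / q)
        = (q-1) * ∑ i ∈ Finset.range N, x / q / q ^ (i + 1) + (q-1) * (x/q) := by ring
    set s := (Nat.digits q (x/q)).sum
    set T := ∑ i ∈ Finset.range N, x / q / q ^ (i + 1)
    rw [List.sum_cons, h3]
    have h4 : (q - 1) * (x / q) + (x/q) = q * (x/q) := by
      have : q - 1 + 1 = q := by omega
      calc (q-1) * (x/q) + (x/q) = (q - 1 + 1) * (x/q) := by ring
        _ = q * (x/q) := by rw [this]
    omega

section helpers2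
variable {q n z : ℕ}

lemma AH (hn : 0 < n) (hz : 2 ≤ z) (hdvd : z ∣ q ^ n - 1) (hq : 1 < q)
    (k : ℕ) (hk1 : 1 ≤ k) (hkz : k < z) :
    z * (Nat.digits q (k * ((q ^ n - 1) / z))).sum
      = (q - 1) * ∑ i ∈ Finset.Icc 1 n, k * q ^ i % z := by
  have hze := hzeH (z := z) hq hdvd k
  have hkE : k * ((q ^ n - 1) / z) < q ^ n := by
    have h1 : k * q ^ n < z * q ^ n :=
      mul_lt_mul_of_pos_right hkz (pow_pos (by omega) n)
    have h2 : z * (k * ((q ^ n - 1) / z)) < z * q ^ n := by linarith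
    exact Nat.lt_of_mul_lt_mul_left h2
  have hL := legendreH q hq n (k * ((q ^ n - 1) / z)) hkE
  have hA0 := sumfloorH hn hz hdvd hq k hk1 hkz
  have hgeom := geomH q (by omega) n
  set E := (q ^ n - 1) / z with hE
  set s := (Nat.digits q (k * E)).sum with hs
  set T := ∑ i ∈ Finset.range n, k * E / q ^ (i + 1) with hT
  set S := ∑ i ∈ Finset.Icc 1 n, k * q ^ i % z with hS
  set G := ∑ j ∈ Finset.range n, q ^ j with hG
  have h1q : 1 ≤ q := by omega
  zify [h1q] at hL hA0 hgeom hze ⊢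
  linear_combination (z : ℤ) * hL - ((q : ℤ) - 1) * hA0 - (k : ℤ) * hgeom + hze

lemma A2H (hn : 0 < n) (hq : 1 < q) :
    (Nat.digits q (q ^ n - 1)).sum = n * (q - 1) := by
  have hpow : 1 ≤ q ^ n := Nat.one_le_pow _ _ (by omega)
  have hL := legendreH q hq n (q ^ n - 1) (by omega)
  have hdivs : ∀ i ∈ Finset.range n, (q ^ n - 1) / q ^ (i + 1) = q ^ (n - 1 - i) - 1 := by
    intro i hi
    have hi' : i < n := Finset.mem_range.mp hi
    have hab : q ^ (n - 1 - i) * q ^ (i + 1) = q ^ n := by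
      rw [← pow_add]; congr 1; omega
    have ha : 1 ≤ q ^ (n - 1 - i) := Nat.one_le_pow _ _ (by omega)
    have hb : q ≤ q ^ (i + 1) := by
      calc q = q ^ 1 := (pow_one q).symm
        _ ≤ q ^ (i + 1) := Nat.pow_le_pow_right (by omega) (by omega)
    apply Nat.div_eq_of_lt_le
    · rw [Nat.sub_mul, one_mul, hab]; omega
    · rw [Nat.sub_add_cancel ha, hab]; omega
  rw [Finset.sum_congr rfl hdivs] at hL
  rw [Finset.sum_range_reflect (fun j => q ^ j - 1) n] at hL
  have hDG : ∑ j ∈ Finset.range n, (q ^ j - 1) + n = ∑ j ∈ Finset.range n, q ^ j := by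
    have h1 : ∑ j ∈ Finset.range n, ((q ^ j - 1) + 1) = ∑ j ∈ Finset.range n, q ^ j := by
      apply Finset.sum_congr rfl
      intro j _
      have : 1 ≤ q ^ j := Nat.one_le_pow _ _ (by omega)
      omega
    rw [Finset.sum_add_distrib, Finset.sum_const, Finset.card_range, smul_eq_mul,
      mul_one] at h1
    exact h1
  have hgeom := geomH q (by omega) n
  set G := ∑ j ∈ Finset.range n, q ^ j with hG
  set D := ∑ j ∈ Finset.range n, (q ^ j - 1) with hD
  set s := (Nat.digits q (q ^ n - 1)).sum with hs
  have h1q : 1 ≤ q := by omega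
  zify [h1q, hpow] at hL hDG hgeom ⊢
  linear_combination hL - ((q : ℤ) - 1) * hDG - hgeom + ((q:ℤ) - 1) * hDG - ((q:ℤ) - 1) * hDG

lemma modsplitH (hz : 0 < z) (a b : ℕ) (ha : a < z) (hb : b < z) :
    (a + b) % z = if z ≤ a + b then a + b - z else a + b := by
  split
  · next h =>
    rw [Nat.mod_eq_sub_mod h, Nat.mod_eq_of_lt (by omega)]
  · next h =>
    exact Nat.mod_eq_of_lt (by omega)

lemma OVH (hn : 0 < n) (hz : 2 ≤ z) (hdvd : z ∣ q ^ n - 1) (hq : 1 < q)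
    (k l m : ℕ) (hk1 : 1 ≤ k) (hkz : k < z) (hl1 : 1 ≤ l) (hlz : l < z)
    (hm : m + z = k + l) (hm1 : 1 ≤ m) (hmz : m < z)
    (j : ℕ) (hj1 : 1 ≤ j) (hjn : j < n) (hjd : q ^ j ∣ m * ((q ^ n - 1) / z)) :
    z ≤ k * q ^ (n - j) % z + l * q ^ (n - j) % z := by
  by_contra hlt
  push_neg at hlt
  set E := (q ^ n - 1) / z with hE
  set a := k * q ^ (n - j) % z with ha
  set b := l * q ^ (n - j) % z with hb
  set ρ := m * q ^ (n - j) % z with hρ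
  have haz : a < z := Nat.mod_lt _ (by omega)
  have hbz : b < z := Nat.mod_lt _ (by omega)
  have hab : a + b = ρ := by
    have h2 : k * q ^ (n - j) + l * q ^ (n - j) = m * q ^ (n - j) + q ^ (n - j) * z := by
      calc k * q ^ (n - j) + l * q ^ (n - j) = (k + l) * q ^ (n - j) := by ring
        _ = (m + z) * q ^ (n - j) := by rw [hm]
        _ = m * q ^ (n - j) + q ^ (n - j) * z := by ring
    have h1 : (k * q ^ (n - j) + l * q ^ (n - j)) % z = ρ := by
      rw [h2, Nat.add_mul_mod_self_right]
    have h3 : (k * q ^ (n - j) + l * q ^ (n - j)) % z = (a + b) % z :=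
      Nat.add_mod _ _ _
    have h4 : (a + b) % z = a + b := Nat.mod_eq_of_lt (by omega)
    omega
  -- ρ * q ^ j = m
  obtain ⟨w, hw⟩ := hjd
  have hfl := floorH hn hz hdvd hq m hm1 hmz j (by omega)
  rw [← hE] at hfl
  have hW : m * E / q ^ j = w := by
    rw [hw, Nat.mul_div_cancel_left w (pow_pos (by omega) j)]
  rw [hW] at hfl
  -- hfl : z * w + ρ = m * q ^ (n - j)
  have hq1 : q ^ (n - j) * q ^ j = q ^ n := by rw [← pow_add]; congr 1; omega
  have hzeM := hzeH (z := z) hq hdvd m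
  rw [← hE] at hzeM
  have e1 : z * (w * q ^ j) + ρ * q ^ j = m * q ^ n := by
    calc z * (w * q ^ j) + ρ * q ^ j = (z * w + ρ) * q ^ j := by ring
      _ = m * q ^ (n - j) * q ^ j := by rw [hfl]
      _ = m * q ^ n := by rw [mul_assoc, hq1]
  have e2 : w * q ^ j = m * E := by rw [hw]; ring
  have hρm : ρ * q ^ j = m := by
    have e3 : z * (m * E) + ρ * q ^ j = m * q ^ n := by rw [← e2]; linarith
    linarith
  have haq : a * q ^ j % z = k % z := mulmodH hdvd hq k (n - j) j (by omega)
  have hbq : b * q ^ j % z = l % z := mulmodH hdvd hq l (n - j) j (by omega)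
  have hak : a * q ^ j = k := by
    have h5 : a * q ^ j ≤ ρ * q ^ j := Nat.mul_le_mul_right _ (by omega)
    have h6 : a * q ^ j < z := by omega
    rw [Nat.mod_eq_of_lt h6, Nat.mod_eq_of_lt hkz] at haq
    exact haq
  have hbl : b * q ^ j = l := by
    have h5 : b * q ^ j ≤ ρ * q ^ j := Nat.mul_le_mul_right _ (by omega)
    have h6 : b * q ^ j < z := by omega
    rw [Nat.mod_eq_of_lt h6, Nat.mod_eq_of_lt hlz] at hbq
    exact hbq
  have : a * q ^ j + b * q ^ j = ρ * q ^ j := by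
    calc a * q ^ j + b * q ^ j = (a + b) * q ^ j := by ring
      _ = ρ * q ^ j := by rw [hab]
  omega

end helpers2

theorem stmt_16 (q n e z k l : ℕ) (hq : 1 < q) (hn : 0 < n) (hz : 0 < z)
    (hdvd : z ∣ q ^ n - 1) (he : e = (q ^ n - 1) / z)
    (hk1 : 1 ≤ k) (hkz : k < z) (hl1 : 1 ≤ l) (hlz : l < z) :
    (Nat.digits q (k * e + l * e)).sum <
        (Nat.digits q (k * e)).sum + (Nat.digits q (l * e)).sum ↔
      (∃ i ∈ Finset.Icc 1 n, z ≤ k * q ^ i % z + l * q ^ i % z) ∧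
        ¬ (∀ j ∈ Finset.Icc 1 n, k * q ^ j % z + l * q ^ j % z = z) := by
  subst he
  have hz2 : 2 ≤ z := by omega
  have hq0 : 0 < q := by omega
  have h1q : 1 ≤ q := by omega
  have hpow : 1 ≤ q ^ n := Nat.one_le_pow _ _ hq0
  have hpow2 : 2 ≤ q ^ n := by
    calc 2 ≤ q := hq
      _ = q ^ 1 := (pow_one q).symm
      _ ≤ q ^ n := Nat.pow_le_pow_right (by omega) (by omega)
  have hnmem : n ∈ Finset.Icc 1 n := Finset.mem_Icc.mpr ⟨hn, le_refl n⟩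
  have hmodn : ∀ a, a < z → a * q ^ n % z = a := fun a haz => by
    rw [powmodH hdvd hq a, Nat.mod_eq_of_lt haz]
  rcases lt_trichotomy (k + l) z with hlt | heq | hgt
  -- CASE 1 : k + l < z
  · have hAk := AH hn hz2 hdvd hq k hk1 hkz
    have hAl := AH hn hz2 hdvd hq l hl1 hlz
    have hAkl := AH hn hz2 hdvd hq (k + l) (by omega) hlt
    have hsplit : k * ((q ^ n - 1) / z) + l * ((q ^ n - 1) / z)
        = (k + l) * ((q ^ n - 1) / z) := (add_mul k l _).symm
    rw [hsplit]
    set s12 := (Nat.digits q ((k + l) * ((q ^ n - 1) / z))).sum with hs12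
    set s1 := (Nat.digits q (k * ((q ^ n - 1) / z))).sum with hs1
    set s2 := (Nat.digits q (l * ((q ^ n - 1) / z))).sum with hs2
    have key : ∀ i ∈ Finset.Icc 1 n,
        (k + l) * q ^ i % z + (if z ≤ k * q ^ i % z + l * q ^ i % z then z else 0)
          = k * q ^ i % z + l * q ^ i % z := by
      intro i _
      have haz : k * q ^ i % z < z := Nat.mod_lt _ (by omega)
      have hbz : l * q ^ i % z < z := Nat.mod_lt _ (by omega)
      have h7 : (k + l) * q ^ i % z = (k * q ^ i % z + l * q ^ i % z) % z := by
        rw [add_mul, Nat.add_mod]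
      rw [h7, modsplitH (by omega) _ _ haz hbz]
      split <;> omega
    have hsum_eq : (∑ i ∈ Finset.Icc 1 n, (k + l) * q ^ i % z)
        + ∑ i ∈ Finset.Icc 1 n, (if z ≤ k * q ^ i % z + l * q ^ i % z then z else 0)
        = (∑ i ∈ Finset.Icc 1 n, k * q ^ i % z)
          + ∑ i ∈ Finset.Icc 1 n, l * q ^ i % z := by
      rw [← Finset.sum_add_distrib, ← Finset.sum_add_distrib]
      exact Finset.sum_congr rfl key
    constructor
    · intro h
      constructor
      · by_contra hno
        push_neg at hno
        have hzero : ∑ i ∈ Finset.Icc 1 n,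
            (if z ≤ k * q ^ i % z + l * q ^ i % z then z else 0) = 0 :=
          Finset.sum_eq_zero fun i hi => if_neg (by
            have := hno i hi; omega)
        have hSeq : (∑ i ∈ Finset.Icc 1 n, (k + l) * q ^ i % z)
            = (∑ i ∈ Finset.Icc 1 n, k * q ^ i % z)
              + ∑ i ∈ Finset.Icc 1 n, l * q ^ i % z := by omega
        have : z * s12 = z * (s1 + s2) := by
          calc z * s12 = (q - 1) * ∑ i ∈ Finset.Icc 1 n, (k + l) * q ^ i % z := hAkl
            _ = (q - 1) * ((∑ i ∈ Finset.Icc 1 n, k * q ^ i % z)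
                  + ∑ i ∈ Finset.Icc 1 n, l * q ^ i % z) := by rw [hSeq]
            _ = (q - 1) * (∑ i ∈ Finset.Icc 1 n, k * q ^ i % z)
                  + (q - 1) * ∑ i ∈ Finset.Icc 1 n, l * q ^ i % z := mul_add _ _ _
            _ = z * s1 + z * s2 := by rw [hAk, hAl]
            _ = z * (s1 + s2) := (mul_add _ _ _).symm
        have := Nat.eq_of_mul_eq_mul_left (by omega : 0 < z) this
        omega
      · intro hall
        have := hall n hnmem
        rw [hmodn k hkz, hmodn l hlz] at this
        omega
    · rintro ⟨⟨i, hi, hzi⟩, -⟩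
      have hpos : 0 < ∑ i ∈ Finset.Icc 1 n,
          (if z ≤ k * q ^ i % z + l * q ^ i % z then z else 0) :=
        Finset.sum_pos' (fun _ _ => Nat.zero_le _)
          ⟨i, hi, by rw [if_pos hzi]; omega⟩
      have hSlt : (∑ i ∈ Finset.Icc 1 n, (k + l) * q ^ i % z)
          < (∑ i ∈ Finset.Icc 1 n, k * q ^ i % z)
            + ∑ i ∈ Finset.Icc 1 n, l * q ^ i % z := by omega
      have hmul : z * s12 < z * (s1 + s2) := by
        calc z * s12 = (q - 1) * ∑ i ∈ Finset.Icc 1 n, (k + l) * q ^ i % z := hAkl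
          _ < (q - 1) * ((∑ i ∈ Finset.Icc 1 n, k * q ^ i % z)
                + ∑ i ∈ Finset.Icc 1 n, l * q ^ i % z) :=
              mul_lt_mul_of_pos_left hSlt (by omega)
          _ = (q - 1) * (∑ i ∈ Finset.Icc 1 n, k * q ^ i % z)
                + (q - 1) * ∑ i ∈ Finset.Icc 1 n, l * q ^ i % z := mul_add _ _ _
          _ = z * s1 + z * s2 := by rw [hAk, hAl]
          _ = z * (s1 + s2) := (mul_add _ _ _).symm
      exact Nat.lt_of_mul_lt_mul_left hmul
  -- CASE 2 : k + l = z
  · have hsplit : k * ((q ^ n - 1) / z) + l * ((q ^ n - 1) / z) = q ^ n - 1 := by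
      calc k * ((q ^ n - 1) / z) + l * ((q ^ n - 1) / z)
          = (k + l) * ((q ^ n - 1) / z) := (add_mul k l _).symm
        _ = z * ((q ^ n - 1) / z) := by rw [heq]
        _ = q ^ n - 1 := Nat.mul_div_cancel' hdvd
    rw [hsplit]
    have hAk := AH hn hz2 hdvd hq k hk1 hkz
    have hAl := AH hn hz2 hdvd hq l hl1 hlz
    have hs12 := A2H hn hq
    set s1 := (Nat.digits q (k * ((q ^ n - 1) / z))).sum with hs1
    set s2 := (Nat.digits q (l * ((q ^ n - 1) / z))).sum with hs2
    have perj : ∀ j ∈ Finset.Icc 1 n, k * q ^ j % z + l * q ^ j % z = z := by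
      intro j _
      have haz : k * q ^ j % z < z := Nat.mod_lt _ (by omega)
      have hbz : l * q ^ j % z < z := Nat.mod_lt _ (by omega)
      have ha0 : k * q ^ j % z ≠ 0 := modne0H hn hz2 hdvd hq k j hk1 hkz
      have hc : (k * q ^ j % z + l * q ^ j % z) % z = 0 := by
        rw [← Nat.add_mod, ← add_mul, heq, Nat.mul_mod_right]
      rw [modsplitH (by omega) _ _ haz hbz] at hc
      split at hc <;> omega
    have hSkSl : (∑ i ∈ Finset.Icc 1 n, k * q ^ i % z)
        + ∑ i ∈ Finset.Icc 1 n, l * q ^ i % z = n * z := by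
      calc (∑ i ∈ Finset.Icc 1 n, k * q ^ i % z)
            + ∑ i ∈ Finset.Icc 1 n, l * q ^ i % z
          = ∑ i ∈ Finset.Icc 1 n, (k * q ^ i % z + l * q ^ i % z) :=
            Finset.sum_add_distrib.symm
        _ = ∑ _i ∈ Finset.Icc 1 n, z := Finset.sum_congr rfl perj
        _ = n * z := by rw [Finset.sum_const, Nat.card_Icc]; simp [mul_comm]
    have hsum : s1 + s2 = n * (q - 1) := by
      have hmm : z * (s1 + s2) = z * (n * (q - 1)) := by
        calc z * (s1 + s2) = z * s1 + z * s2 := mul_add _ _ _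
          _ = (q - 1) * (∑ i ∈ Finset.Icc 1 n, k * q ^ i % z)
              + (q - 1) * ∑ i ∈ Finset.Icc 1 n, l * q ^ i % z := by rw [hAk, hAl]
          _ = (q - 1) * ((∑ i ∈ Finset.Icc 1 n, k * q ^ i % z)
              + ∑ i ∈ Finset.Icc 1 n, l * q ^ i % z) := (mul_add _ _ _).symm
          _ = (q - 1) * (n * z) := by rw [hSkSl]
          _ = z * (n * (q - 1)) := by ring
      exact Nat.eq_of_mul_eq_mul_left (by omega) hmm
    exact iff_of_false (by omega) (fun h => h.2 perj)
  -- CASE 3 : z < k + l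
  · set E := (q ^ n - 1) / z with hE
    have hzE : z * E = q ^ n - 1 := Nat.mul_div_cancel' hdvd
    set m := k + l - z with hm'
    have hm : m + z = k + l := by omega
    have hm1 : 1 ≤ m := by omega
    have hmz : m < z := by omega
    have hE1 : 1 ≤ E := by
      rcases Nat.eq_zero_or_pos E with h | h
      · rw [h, mul_zero] at hzE; omega
      · exact h
    have hsplit : k * E + l * E = q ^ n - 1 + m * E := by
      have h1 : k * E + l * E = m * E + z * E := by
        calc k * E + l * E = (k + l) * E := (add_mul k l _).symm
          _ = (m + z) * E := by rw [hm]
          _ = m * E + z * E := add_mul _ _ _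
      rw [h1, hzE]; omega
    rw [hsplit]
    set y := m * E with hy
    have hy1 : 1 ≤ y := by
      have := Nat.mul_le_mul hm1 hE1
      simpa using this
    have hzeM := hzeH (z := z) hq hdvd m
    rw [← hE, ← hy] at hzeM
    have hylt : y < q ^ n := by
      have h1 : m * q ^ n < z * q ^ n :=
        mul_lt_mul_of_pos_right hmz (pow_pos hq0 n)
      have h2 : z * y < z * q ^ n := by linarith
      exact Nat.lt_of_mul_lt_mul_left h2
    -- Legendre for x = q^n - 1 + y
    have hx : q ^ n - 1 + y < q ^ (n + 1) := by
      have h2 : 2 * q ^ n ≤ q * q ^ n := Nat.mul_le_mul_right (q ^ n) hq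
      have h4 : q ^ (n + 1) = q * q ^ n := by ring
      omega
    have hL12 := legendreH q hq (n + 1) (q ^ n - 1 + y) hx
    rw [Finset.sum_range_succ] at hL12
    rw [Nat.div_eq_of_lt hx, add_zero] at hL12
    have hdivi : ∀ i ∈ Finset.range n,
        (q ^ n - 1 + y) / q ^ (i + 1) = q ^ (n - 1 - i) + (y - 1) / q ^ (i + 1) := by
      intro i hi
      have hi' : i < n := Finset.mem_range.mp hi
      have hqq : q ^ (i + 1) * q ^ (n - 1 - i) = q ^ n := by
        rw [← pow_add]; congr 1; omega
      have hsplit2 : q ^ n - 1 + y = (y - 1) + q ^ (i + 1) * q ^ (n - 1 - i) := by omega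
      rw [hsplit2, Nat.add_mul_div_left _ _ (pow_pos hq0 (i + 1))]
      omega
    rw [Finset.sum_congr rfl hdivi, Finset.sum_add_distrib] at hL12
    rw [Finset.sum_range_reflect (fun j => q ^ j) n] at hL12
    -- succ_div
    have hsucc : ∀ i ∈ Finset.range n, y / q ^ (i + 1)
        = (y - 1) / q ^ (i + 1) + if q ^ (i + 1) ∣ y then 1 else 0 := by
      intro i _
      have h5 : y - 1 + 1 = y := by omega
      calc y / q ^ (i + 1) = (y - 1 + 1) / q ^ (i + 1) := by rw [h5]
        _ = (y - 1) / q ^ (i + 1) + if q ^ (i + 1) ∣ (y - 1 + 1) then 1 else 0 :=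
            Nat.succ_div
        _ = (y - 1) / q ^ (i + 1) + if q ^ (i + 1) ∣ y then 1 else 0 := by rw [h5]
    set Tset := (Finset.range n).filter (fun i => q ^ (i + 1) ∣ y) with hTset
    have hsumt : ∑ i ∈ Finset.range n, (if q ^ (i + 1) ∣ y then 1 else 0) = Tset.card := by
      rw [hTset]
      simpa using Finset.sum_boole (s := Finset.range n) (p := fun i => q ^ (i + 1) ∣ y)
    have hTy : ∑ i ∈ Finset.range n, y / q ^ (i + 1)
        = (∑ i ∈ Finset.range n, (y - 1) / q ^ (i + 1)) + Tset.card := by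
      rw [Finset.sum_congr rfl hsucc, Finset.sum_add_distrib, hsumt]
    have hA0m := sumfloorH hn hz2 hdvd hq m hm1 hmz
    rw [← hE, ← hy] at hA0m
    have hAk := AH hn hz2 hdvd hq k hk1 hkz
    have hAl := AH hn hz2 hdvd hq l hl1 hlz
    rw [← hE] at hAk hAl
    -- Sk + Sl = Sm + z * c
    set Cset := (Finset.Icc 1 n).filter (fun i => z ≤ k * q ^ i % z + l * q ^ i % z)
      with hCset
    have key : ∀ i ∈ Finset.Icc 1 n, k * q ^ i % z + l * q ^ i % z
        = m * q ^ i % z + (if z ≤ k * q ^ i % z + l * q ^ i % z then z else 0) := by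
      intro i _
      have haz : k * q ^ i % z < z := Nat.mod_lt _ (by omega)
      have hbz : l * q ^ i % z < z := Nat.mod_lt _ (by omega)
      have hc : (k * q ^ i % z + l * q ^ i % z) % z = m * q ^ i % z := by
        rw [← Nat.add_mod]
        have h7 : k * q ^ i + l * q ^ i = m * q ^ i + q ^ i * z := by
          calc k * q ^ i + l * q ^ i = (k + l) * q ^ i := by ring
            _ = (m + z) * q ^ i := by rw [hm]
            _ = m * q ^ i + q ^ i * z := by ring
        rw [h7, Nat.add_mul_mod_self_right]
      rw [modsplitH (by omega) _ _ haz hbz] at hc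
      by_cases hcase : z ≤ k * q ^ i % z + l * q ^ i % z
      · rw [if_pos hcase] at hc ⊢; omega
      · rw [if_neg hcase] at hc ⊢; omega
    have hSkl : (∑ i ∈ Finset.Icc 1 n, k * q ^ i % z)
        + ∑ i ∈ Finset.Icc 1 n, l * q ^ i % z
        = (∑ i ∈ Finset.Icc 1 n, m * q ^ i % z) + z * Cset.card := by
      calc (∑ i ∈ Finset.Icc 1 n, k * q ^ i % z)
            + ∑ i ∈ Finset.Icc 1 n, l * q ^ i % z
          = ∑ i ∈ Finset.Icc 1 n, (k * q ^ i % z + l * q ^ i % z) :=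
            Finset.sum_add_distrib.symm
        _ = ∑ i ∈ Finset.Icc 1 n, (m * q ^ i % z
              + (if z ≤ k * q ^ i % z + l * q ^ i % z then z else 0)) :=
            Finset.sum_congr rfl key
        _ = (∑ i ∈ Finset.Icc 1 n, m * q ^ i % z)
              + ∑ i ∈ Finset.Icc 1 n,
                (if z ≤ k * q ^ i % z + l * q ^ i % z then z else 0) :=
            Finset.sum_add_distrib
        _ = (∑ i ∈ Finset.Icc 1 n, m * q ^ i % z) + z * Cset.card := by
            congr 1
            calc ∑ i ∈ Finset.Icc 1 n,
                  (if z ≤ k * q ^ i % z + l * q ^ i % z then z else 0)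
                = ∑ i ∈ Finset.Icc 1 n,
                  z * (if z ≤ k * q ^ i % z + l * q ^ i % z then 1 else 0) := by
                  apply Finset.sum_congr rfl; intro i _; split <;> simp
              _ = z * ∑ i ∈ Finset.Icc 1 n,
                  (if z ≤ k * q ^ i % z + l * q ^ i % z then 1 else 0) :=
                  (Finset.mul_sum _ _ _).symm
              _ = z * Cset.card := by
                  rw [hCset]
                  congr 1
                  simpa using Finset.sum_boole (s := Finset.Icc 1 n)
                    (p := fun i => z ≤ k * q ^ i % z + l * q ^ i % z)
    -- cardinality bound
    have hcard : Tset.card + 1 ≤ Cset.card := by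
      have hnC : n ∈ Cset := Finset.mem_filter.mpr
        ⟨hnmem, by rw [hmodn k hkz, hmodn l hlz]; omega⟩
      have hmap : ∀ i ∈ Tset, n - (i + 1) ∈ Cset := by
        intro i hi
        obtain ⟨hir, hid⟩ := Finset.mem_filter.mp hi
        have hi' : i < n := Finset.mem_range.mp hir
        have hne : i + 1 ≠ n := by
          intro hcontra
          rw [hcontra] at hid
          have := Nat.le_of_dvd (by omega) hid
          omega
        have hov := OVH hn hz2 hdvd hq k l m hk1 hkz hl1 hlz hm hm1 hmz
          (i + 1) (by omega) (by omega) (by rwa [hy, hE] at hid)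
        exact Finset.mem_filter.mpr ⟨Finset.mem_Icc.mpr ⟨by omega, by omega⟩, hov⟩
      have himg : Tset.image (fun i => n - (i + 1)) ⊆ Cset := by
        intro x hx
        obtain ⟨i, hi, rfl⟩ := Finset.mem_image.mp hx
        exact hmap i hi
      have hninimg : n ∉ Tset.image (fun i => n - (i + 1)) := by
        intro hcontra
        obtain ⟨i, hi, heqi⟩ := Finset.mem_image.mp hcontra
        have hi' : i < n := Finset.mem_range.mp (Finset.mem_filter.mp hi).1
        omega
      have hsub : insert n (Tset.image (fun i => n - (i + 1))) ⊆ Cset := by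
        intro x hx
        rcases Finset.mem_insert.mp hx with rfl | hx
        · exact hnC
        · exact himg hx
      have hinj : Set.InjOn (fun i => n - (i + 1)) ↑Tset := by
        intro i hi j hj hij
        rw [Finset.mem_coe] at hi hj
        have hi' : i < n := Finset.mem_range.mp (Finset.mem_filter.mp hi).1
        have hj' : j < n := Finset.mem_range.mp (Finset.mem_filter.mp hj).1
        simp only at hij
        omega
      calc Tset.card + 1 = (Tset.image (fun i => n - (i + 1))).card + 1 := by
            rw [Finset.card_image_of_injOn hinj]
        _ = (insert n (Tset.image (fun i => n - (i + 1)))).card :=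
            (Finset.card_insert_of_notMem hninimg).symm
        _ ≤ Cset.card := Finset.card_le_card hsub
    -- final algebra
    have hgeom := geomH q h1q n
    set s12 := (Nat.digits q (q ^ n - 1 + y)).sum with hs12'
    set s1 := (Nat.digits q (k * E)).sum with hs1'
    set s2 := (Nat.digits q (l * E)).sum with hs2'
    set D := ∑ i ∈ Finset.range n, (y - 1) / q ^ (i + 1) with hD'
    set Ty := ∑ i ∈ Finset.range n, y / q ^ (i + 1) with hTy'
    set G := ∑ j ∈ Finset.range n, q ^ j with hG'
    set Sm := ∑ i ∈ Finset.Icc 1 n, m * q ^ i % z with hSm'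
    set Sk := ∑ i ∈ Finset.Icc 1 n, k * q ^ i % z with hSk'
    set Sl := ∑ i ∈ Finset.Icc 1 n, l * q ^ i % z with hSl'
    set t := Tset.card with ht'
    set c := Cset.card with hc'
    have eq1 : z * s12 = (q - 1) * Sm + (q - 1) * (z * t) := by
      zify [h1q, hpow, hy1] at hL12 hTy hA0m hgeom hzeM ⊢
      linear_combination (z : ℤ) * hL12 - (z : ℤ) * hgeom
        + ((q : ℤ) - 1) * (z : ℤ) * hTy - ((q : ℤ) - 1) * hA0m
        - (m : ℤ) * hgeom + hzeM
    have eq2 : z * s1 + z * s2 = (q - 1) * Sm + (q - 1) * (z * c) := by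
      zify [h1q] at hAk hAl hSkl ⊢
      linear_combination hAk + hAl + ((q : ℤ) - 1) * hSkl
    have hstep : (q - 1) * (z * t) + (q - 1) * z ≤ (q - 1) * (z * c) := by
      have h1 : z * (t + 1) ≤ z * c := Nat.mul_le_mul_left z hcard
      have h2 : (q - 1) * (z * (t + 1)) ≤ (q - 1) * (z * c) :=
        Nat.mul_le_mul_left (q - 1) h1
      have h3 : (q - 1) * (z * (t + 1)) = (q - 1) * (z * t) + (q - 1) * z := by ring
      omega
    have hposqz : 1 ≤ (q - 1) * z := by
      have : 1 * 1 ≤ (q - 1) * z := Nat.mul_le_mul (by omega) (by omega)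
      simpa using this
    have hfin : z * s12 < z * (s1 + s2) := by
      have : z * (s1 + s2) = z * s1 + z * s2 := mul_add _ _ _
      omega
    refine iff_of_true (Nat.lt_of_mul_lt_mul_left hfin) ?_
    constructor
    · exact ⟨n, hnmem, by rw [hmodn k hkz, hmodn l hlz]; omega⟩
    · intro hall
      have := hall n hnmem
      rw [hmodn k hkz, hmodn l hlz] at this
      omega
end

section
/- Let q, e be positive integers with 1 < q < e and gcd(q,e) = 1, and suppose the base-q expansion of e is e = i_1 + q*i_2 + ... + q^l * i_{l+1} with i_{l+1} ≠ 0 and l ≥ 2 and q ≥ 3. Then m(q,e) < e/3. -/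
/-- Expand a digit list into a list of exponents, each digit `d` at position `i`
contributing `d` copies of `i`. -/
def expandDigits : List ℕ → List ℕ
  | [] => []
  | d :: L => List.replicate d 0 ++ (expandDigits L).map (· + 1)

lemma expandDigits_length (L : List ℕ) : (expandDigits L).length = L.sum := by
  induction L with
  | nil => rfl
  | cons d L ih => simp [expandDigits, ih]

lemma expandDigits_sum (q : ℕ) (L : List ℕ) :
    ((expandDigits L).map (q ^ ·)).sum = Nat.ofDigits q L := by
  induction L with
  | nil => simp [expandDigits, Nat.ofDigits]
  | cons d L ih =>
    simp only [expandDigits, List.map_append, List.sum_append, List.map_replicate,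
      List.map_map, Nat.ofDigits_cons]
    have h : ((expandDigits L).map ((q ^ ·) ∘ (· + 1))).sum = q * Nat.ofDigits q L := by
      rw [← ih, ← List.sum_map_mul_left]
      congr 1
      apply List.map_congr_left
      intro x _
      simp [pow_succ, mul_comm]
    simp [h, pow_zero]

lemma mqe_le_digit_sum (q e : ℕ) (hq : 2 ≤ q) (he : 0 < e) :
    mqe q e ≤ (Nat.digits q e).sum := by
  apply Nat.sInf_le
  set J := expandDigits (Nat.digits q e) with hJ
  set s := (Nat.digits q e).sum with hs
  have hlen : J.length = s := expandDigits_length _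
  constructor
  · -- s > 0
    rcases Nat.eq_zero_or_pos s with h0 | h0
    · exfalso
      have hne : Nat.digits q e ≠ [] := Nat.digits_ne_nil_iff_ne_zero.mpr he.ne'
      have hlast := Nat.getLast_digit_ne_zero q he.ne'
      have hmem : (Nat.digits q e).getLast hne ∈ Nat.digits q e := List.getLast_mem hne
      have hle : (Nat.digits q e).getLast hne ≤ s :=
        List.single_le_sum (fun x _ => Nat.zero_le x) _ hmem
      omega
    · exact h0
  · refine ⟨fun i => J.get (Fin.cast hlen.symm i), ?_⟩
    have h1 : ∑ i : Fin s, q ^ J.get (Fin.cast hlen.symm i)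
        = ∑ i : Fin J.length, q ^ J[i.1] :=
      Fintype.sum_equiv (finCongr hlen.symm) (fun i => q ^ J.get (Fin.cast hlen.symm i))
        (fun i => q ^ J[i.1]) (fun i => rfl)
    rw [h1, Fin.sum_univ_fun_getElem, expandDigits_sum, Nat.ofDigits_digits]

theorem stmt_17 (q e l : ℕ) (hq : 3 ≤ q) (hqe : q < e) (hcop : Nat.gcd q e = 1)
    (hl : 2 ≤ l) (hlen : (Nat.digits q e).length = l + 1) :
    3 * mqe q e < e := by
  have hq2 : 2 ≤ q := by omega
  have hq1 : 1 < q := by omega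
  have he : 0 < e := by omega
  -- e ≥ q^l ≥ q^2
  have hpow : q ^ (l + 1) ≤ q * e := by
    rw [← hlen]
    exact Nat.base_pow_length_digits_le q e hq1 he.ne'
  have hq2e : q * q ≤ e := by
    have h2 : q ^ (2 + 1) ≤ q ^ (l + 1) := Nat.pow_le_pow_right (by omega) (by omega)
    have : q * (q * q) ≤ q * e := by
      calc q * (q * q) = q ^ (2 + 1) := by ring
        _ ≤ q ^ (l + 1) := h2
        _ ≤ q * e := hpow
    exact Nat.le_of_mul_le_mul_left this (by omega)
  -- decompose e
  set a := e % q with ha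
  set r := e / q with hr
  have hrpos : 0 < r := Nat.div_pos (le_of_lt hqe) (by omega)
  set b := r % q with hb
  set m := r / q with hm
  have hmpos : 0 < m := by
    apply Nat.div_pos _ (by omega)
    rw [hr, Nat.le_div_iff_mul_le (by omega : 0 < q)]
    exact hq2e
  have hdig : Nat.digits q e = a :: b :: Nat.digits q m := by
    rw [Nat.digits_def' hq1 he, Nat.digits_def' hq1 hrpos]
  have hs : (Nat.digits q e).sum = a + b + (Nat.digits q m).sum := by
    rw [hdig]; simp [add_assoc]
  have hsm : (Nat.digits q m).sum ≤ m := Nat.digit_sum_le q m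
  have he' : e = a + q * (b + q * m) := by
    have h1 : a + q * r = e := Nat.mod_add_div e q
    have h2 : b + q * m = r := Nat.mod_add_div r q
    rw [h2]; exact h1.symm
  have hmqe := mqe_le_digit_sum q e hq2 he
  have halt : a < q := Nat.mod_lt _ (by omega)
  nlinarith [hmqe, hsm, halt, hmpos, he', hs, Nat.mul_le_mul_left q hmpos]
end

section
/- Let q ≥ 3 be an odd positive integer and e = 2q - 2. Then m(q,e) = q - 1 = e/2. -/
theorem stmt_18 (q : ℕ) (hq : 3 ≤ q) (hodd : Odd q) :
    mqe q (2 * q - 2) = q - 1 := by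
  have hq1 : 0 < q - 1 := by omega
  set S : Set ℕ := {t | 0 < t ∧ ∃ f : Fin t → ℕ, (2 * q - 2) ∣ ∑ i, q ^ f i} with hS
  have hmem : q - 1 ∈ S := by
    refine ⟨hq1, fun i => if i = (⟨0, hq1⟩ : Fin (q - 1)) then 1 else 0, ?_⟩
    have h1 : ∀ i : Fin (q - 1),
        q ^ (if i = (⟨0, hq1⟩ : Fin (q - 1)) then 1 else 0)
          = (if i = (⟨0, hq1⟩ : Fin (q - 1)) then q - 1 else 0) + 1 := by
      intro i
      split <;> simp <;> omega
    rw [Finset.sum_congr rfl (fun i _ => h1 i), Finset.sum_add_distrib,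
      Finset.sum_ite_eq' Finset.univ (⟨0, hq1⟩ : Fin (q - 1)) (fun _ => q - 1)]
    simp only [Finset.mem_univ, if_true, Finset.sum_const, Finset.card_univ,
      Fintype.card_fin, smul_eq_mul, mul_one]
    have h2 : q - 1 + (q - 1) = 2 * q - 2 := by omega
    rw [h2]
  haveI : NeZero (q - 1) := ⟨by omega⟩
  have hlb : ∀ t ∈ S, q - 1 ≤ t := by
    rintro t ⟨ht, f, hf⟩
    have hdvd : (q - 1) ∣ ∑ i, q ^ f i := by
      refine dvd_trans ⟨2, by omega⟩ hf
    have hcast : ((∑ i, q ^ f i : ℕ) : ZMod (q - 1)) = (t : ZMod (q - 1)) := by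
      push_cast
      have hqone : (q : ZMod (q - 1)) = 1 := by
        have : ((q - 1 : ℕ) : ZMod (q - 1)) = 0 := ZMod.natCast_self _
        have hq' : (q : ℕ) = (q - 1) + 1 := by omega
        rw [hq']
        push_cast [this]
        ring
      simp [hqone]
    have h0 : ((∑ i, q ^ f i : ℕ) : ZMod (q - 1)) = 0 :=
      (ZMod.natCast_eq_zero_iff _ _).mpr hdvd
    have : (q - 1) ∣ t := by
      rw [← ZMod.natCast_eq_zero_iff, ← hcast, h0]
    exact Nat.le_of_dvd ht this
  have hne : S.Nonempty := ⟨q - 1, hmem⟩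
  have h1 : mqe q (2 * q - 2) ≤ q - 1 := Nat.sInf_le hmem
  have h2 : q - 1 ≤ mqe q (2 * q - 2) := hlb _ (Nat.sInf_mem hne)
  omega
end

section
/- Let q ≥ 4 with gcd(3,q) = 1 and e = 3q - 3. Then m(q,e) = q - 1 = e/3. -/
theorem stmt_19 (q : ℕ) (hq : 4 ≤ q) (hcop : Nat.gcd 3 q = 1) :
    mqe q (3 * q - 3) = q - 1 := by
  have hq1 : 3 ≤ q - 1 := by omega
  have hmem : (q - 1) ∈ {t | 0 < t ∧ ∃ f : Fin t → ℕ, (3 * q - 3) ∣ ∑ i, q ^ f i} := by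
    refine ⟨by omega, fun i => if (i : ℕ) < 2 then 1 else 0, ?_⟩
    have hsum : ∑ i : Fin (q - 1), q ^ (if (i : ℕ) < 2 then 1 else 0) = 3 * q - 3 := by
      rw [Fin.sum_univ_eq_sum_range (fun i => q ^ (if i < 2 then 1 else 0))]
      rw [Finset.range_eq_Ico, ← Finset.sum_Ico_consecutive _ (Nat.zero_le 2) (by omega : 2 ≤ q - 1)]
      have h1 : ∑ i ∈ Finset.Ico 0 2, q ^ (if i < 2 then 1 else 0) = 2 * q := by
        simp [Finset.sum_Ico_eq_sum_range, Finset.sum_range_succ]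
        omega
      have h2 : ∑ i ∈ Finset.Ico 2 (q - 1), q ^ (if i < 2 then 1 else 0) = q - 3 := by
        have hc : ∀ i ∈ Finset.Ico 2 (q - 1), q ^ (if i < 2 then 1 else 0) = 1 := by
          intro i hi
          simp only [Finset.mem_Ico] at hi
          rw [if_neg (by omega), pow_zero]
        rw [Finset.sum_congr rfl hc, Finset.sum_const, smul_eq_mul, mul_one, Nat.card_Ico]
        omega
      rw [h1, h2]; omega
    rw [hsum]
  apply le_antisymm
  · exact Nat.sInf_le hmem
  · have hd3 : (q - 1) ∣ (3 * q - 3) := ⟨3, by omega⟩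
    have hqe : q = (q - 1) + 1 := by omega
    rcases Nat.sInf_mem ⟨q - 1, hmem⟩ with ⟨htpos, f, hdvd⟩
    set t := mqe q (3 * q - 3) with ht
    have hdvd' : (q - 1) ∣ ∑ i, q ^ f i := hd3.trans hdvd
    have hcast : ((t : ℕ) : ZMod (q - 1)) = 0 := by
      have hqc : (q : ZMod (q - 1)) = 1 := by
        rw [hqe]
        push_cast
        simp [ZMod.natCast_self]
      have : ((∑ i, q ^ f i : ℕ) : ZMod (q - 1)) = 0 := by
        rw [ZMod.natCast_eq_zero_iff]
        exact hdvd'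
      rw [Nat.cast_sum] at this
      simp only [Nat.cast_pow, hqc, one_pow] at this
      simpa [ht, mqe] using this
    have : (q - 1) ∣ t := (ZMod.natCast_eq_zero_iff _ _).mp hcast
    exact Nat.le_of_dvd htpos this
end
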